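/- If f is bi-starlike of Ma-Minda type with respect to φ (f ∈ 𝒮*_Σ(φ)), then |a₃ − a₂²| ≤ B₁/2. -/

import Mathlib

open Complex Metric

noncomputable def coeff (f : ℂ → ℂ) (n : ℕ) : ℂ := iteratedDeriv n f 0 / n.factorial

def IsSchwarz (w : ℂ → ℂ) : Prop :=
  AnalyticOnNhd ℂ w (ball 0 1) ∧ w 0 = 0 ∧ ∀ z ∈ ball (0:ℂ) 1, ‖w z‖ < 1

def BiUnivalent (f g : ℂ → ℂ) : Prop :=
  AnalyticOnNhd ℂ f (ball 0 1) ∧ Set.InjOn f (ball 0 1) ∧ f 0 = 0 ∧ deriv f 0 = 1 ∧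
  AnalyticOnNhd ℂ g (ball 0 1) ∧ Set.InjOn g (ball 0 1) ∧
  (∀ᶠ z in nhds (0:ℂ), g (f z) = z) ∧ (∀ᶠ w in nhds (0:ℂ), f (g w) = w)

def MemStar (φ f g : ℂ → ℂ) : Prop :=
  BiUnivalent f g ∧
  (∃ r, IsSchwarz r ∧ ∀ z ∈ ball (0:ℂ) 1, z ≠ 0 → z * deriv f z / f z = φ (r z)) ∧
  (∃ s, IsSchwarz s ∧ ∀ w ∈ ball (0:ℂ) 1, w ≠ 0 → w * deriv g w / g w = φ (s w))

/-!
Write `r z = c₁ z + c₂ z² + ⋯` and `s w = d₁ w + d₂ w² + ⋯` for the Schwarz functions and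
`aₙ`, `bₙ` for the coefficients of `f` and `g = f⁻¹`. Comparing the coefficients of `z²` and `z³`
in `z f' = f · (φ ∘ r)` gives `a₂ = B₁ c₁` and `2 a₃ - a₂² = B₂ c₁² + B₁ c₂`, and likewise for `g`.
Since `b₂ = -a₂` and `b₃ = 2 a₂² - a₃`, this forces `d₁ = -c₁`, so the `B₂` terms cancel on
subtraction and `4 (a₃ - a₂²) = B₁ (c₂ - d₂)`. Cauchy's estimate gives `‖c₂‖, ‖d₂‖ ≤ 1`.
-/

open Filter Topology Set

theorem norm_iteratedDeriv_le_of_forall_mem_ball_norm_le {f : ℂ → ℂ} {c : ℂ} {R C : ℝ}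
    (n : ℕ) (hR : 0 < R) (hf : DifferentiableOn ℂ f (ball c R))
    (hC : ∀ z ∈ ball c R, ‖f z‖ ≤ C) :
    ‖iteratedDeriv n f c‖ ≤ n.factorial * C / R ^ n := by
  have hlim : Tendsto (fun ρ : ℝ => n.factorial * C / ρ ^ n) (𝓝[<] R)
      (𝓝 (n.factorial * C / R ^ n)) :=
    ContinuousAt.continuousWithinAt (by fun_prop (disch := positivity))
  refine ge_of_tendsto hlim ?_
  filter_upwards [Ioo_mem_nhdsLT hR] with ρ ⟨hρ0, hρR⟩
  exact Complex.norm_iteratedDeriv_le_of_forall_mem_sphere_norm_le n hρ0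
    (hf.diffContOnCl_ball (closedBall_subset_ball hρR))
    fun z hz => hC z (sphere_subset_closedBall.trans (closedBall_subset_ball hρR) hz)

theorem coeff_one (f : ℂ → ℂ) : coeff f 1 = deriv f 0 := by
  simp [coeff]

theorem coeff_two (f : ℂ → ℂ) : coeff f 2 = iteratedDeriv 2 f 0 / 2 := by
  simp [coeff, Nat.factorial]

theorem coeff_three (f : ℂ → ℂ) : coeff f 3 = iteratedDeriv 3 f 0 / 6 := by
  simp [coeff, Nat.factorial]

theorem IsSchwarz.norm_coeff_le_one {w : ℂ → ℂ} (hw : IsSchwarz w) (n : ℕ) :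
    ‖coeff w n‖ ≤ 1 := by
  have hn : (0 : ℝ) < n.factorial := mod_cast n.factorial_pos
  have := norm_iteratedDeriv_le_of_forall_mem_ball_norm_le n one_pos
    hw.1.differentiableOn fun z hz => (hw.2.2 z hz).le
  rw [coeff, norm_div, Complex.norm_natCast, div_le_one hn]
  simpa using this

theorem coeff_comp_one {φ w : ℂ → ℂ} (hφ : AnalyticAt ℂ φ 0) (hw : AnalyticAt ℂ w 0)
    (hw0 : w 0 = 0) : coeff (φ ∘ w) 1 = coeff φ 1 * coeff w 1 := by
  rw [← hw0] at hφ
  simp only [coeff_one, deriv_comp 0 hφ.differentiableAt hw.differentiableAt, hw0]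

theorem coeff_comp_two {φ w : ℂ → ℂ} (hφ : AnalyticAt ℂ φ 0) (hw : AnalyticAt ℂ w 0)
    (hw0 : w 0 = 0) :
    coeff (φ ∘ w) 2 = coeff φ 2 * coeff w 1 ^ 2 + coeff φ 1 * coeff w 2 := by
  rw [← hw0] at hφ
  simp only [coeff_one, coeff_two, iteratedDeriv_comp_two hφ.contDiffAt hw.contDiffAt, hw0]
  ring

theorem coeff_of_leftInverse {f g : ℂ → ℂ} (hf : AnalyticAt ℂ f 0) (hg : AnalyticAt ℂ g 0)
    (hf0 : f 0 = 0) (hf1 : deriv f 0 = 1) (hgf : ∀ᶠ z in 𝓝 0, g (f z) = z) :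
    deriv g 0 = 1 ∧ coeff g 2 = -coeff f 2 ∧ coeff g 3 = 2 * coeff f 2 ^ 2 - coeff f 3 := by
  have hgf' : g ∘ f =ᶠ[𝓝 0] fun z => z := hgf
  rw [← hf0] at hg
  have h1 := hgf'.deriv_eq
  have h2 := hgf'.iteratedDeriv_eq 2
  have h3 := hgf'.iteratedDeriv_eq 3
  rw [deriv_comp 0 hg.differentiableAt hf.differentiableAt] at h1
  rw [iteratedDeriv_comp_two hg.contDiffAt hf.contDiffAt] at h2
  rw [iteratedDeriv_comp_three hg.contDiffAt hf.contDiffAt] at h3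
  simp only [deriv_id'', hf0, hf1, mul_one] at h1
  simp only [iteratedDeriv_fun_id_zero, hf0, hf1, h1, one_mul, one_pow, mul_one] at h2 h3
  norm_num at h2 h3
  simp only [coeff_two, coeff_three]
  refine ⟨h1, by linear_combination h2 / 2, ?_⟩
  linear_combination h3 / 6 - iteratedDeriv 2 f 0 / 2 * h2

theorem eventuallyEq_mul_of_div_eq {h P : ℂ → ℂ} (hinj : InjOn h (ball 0 1)) (h0 : h 0 = 0)
    (hrel : ∀ z ∈ ball (0 : ℂ) 1, z ≠ 0 → z * deriv h z / h z = P z) :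
    (fun z => z * deriv h z) =ᶠ[𝓝 0] fun z => h z * P z := by
  filter_upwards [ball_mem_nhds (0 : ℂ) one_pos] with z hz
  rcases eq_or_ne z 0 with rfl | hz0
  · simp [h0]
  · have hhz : h z ≠ 0 := fun hz' => hz0 (hinj hz (mem_ball_self one_pos) (hz'.trans h0.symm))
    rw [← hrel z hz hz0, mul_div_cancel₀ _ hhz]

theorem coeff_of_eventuallyEq_mul {h P : ℂ → ℂ} (hh : AnalyticAt ℂ h 0) (hP : AnalyticAt ℂ P 0)
    (h0 : h 0 = 0) (h1 : deriv h 0 = 1) (hP0 : P 0 = 1)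
    (heq : (fun z => z * deriv h z) =ᶠ[𝓝 0] fun z => h z * P z) :
    coeff h 2 = coeff P 1 ∧ 2 * coeff h 3 = coeff h 2 ^ 2 + coeff P 2 := by
  have e2 := heq.iteratedDeriv_eq 2
  have e3 := heq.iteratedDeriv_eq 3
  rw [iteratedDeriv_fun_mul (f := fun z : ℂ => z) contDiffAt_id hh.deriv.contDiffAt,
    iteratedDeriv_fun_mul hh.contDiffAt hP.contDiffAt] at e2 e3
  simp only [Finset.sum_range_succ, Finset.sum_range_zero, iteratedDeriv_fun_id_zero,
    ← iteratedDeriv_succ', iteratedDeriv_zero, iteratedDeriv_one, h0, h1] at e2 e3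
  norm_num [hP0] at e2 e3
  simp only [coeff_one, coeff_two, coeff_three]
  exact ⟨by linear_combination e2 / 2,
    by linear_combination e3 / 6 - iteratedDeriv 2 h 0 / 4 * e2⟩

theorem coeff_of_mul_deriv_div_eq_comp {φ h w : ℂ → ℂ} (hφ : AnalyticAt ℂ φ 0) (hφ0 : φ 0 = 1)
    (hh : AnalyticAt ℂ h 0) (hinj : InjOn h (ball 0 1)) (h0 : h 0 = 0) (h1 : deriv h 0 = 1)
    (hw : AnalyticAt ℂ w 0) (hw0 : w 0 = 0)
    (hrel : ∀ z ∈ ball (0 : ℂ) 1, z ≠ 0 → z * deriv h z / h z = φ (w z)) :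
    coeff h 2 = coeff φ 1 * coeff w 1 ∧
      2 * coeff h 3 = coeff h 2 ^ 2 + coeff φ 2 * coeff w 1 ^ 2 + coeff φ 1 * coeff w 2 := by
  have hφw : AnalyticAt ℂ (φ ∘ w) 0 := (hw0 ▸ hφ).comp hw
  obtain ⟨e2, e3⟩ := coeff_of_eventuallyEq_mul hh hφw h0 h1 (by simp [hw0, hφ0])
    (eventuallyEq_mul_of_div_eq hinj h0 hrel)
  rw [coeff_comp_one hφ hw hw0] at e2
  rw [coeff_comp_two hφ hw hw0] at e3
  exact ⟨e2, by rw [e3]; ring⟩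

theorem stmt_15_general (B₁ : ℝ) (φ f g : ℂ → ℂ)
    (hφa : AnalyticOnNhd ℂ φ (ball 0 1)) (hφ0 : φ 0 = 1)
    (hB1 : coeff φ 1 = (B₁:ℂ)) (hB1pos : 0 < B₁)
    (hmem : MemStar φ f g) :
    ‖coeff f 3 - (coeff f 2)^2‖ ≤ B₁ / 2 := by
  obtain ⟨⟨hfa, hfinj, hf0, hf1, hga, hginj, hgf, -⟩, ⟨r, hr, hfr⟩, ⟨s, hs, hgs⟩⟩ := hmem
  have h01 : (0 : ℂ) ∈ ball (0 : ℂ) 1 := mem_ball_self one_pos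
  have hg0 : g 0 = 0 := by simpa [hf0] using hgf.self_of_nhds
  obtain ⟨hg1, hb₂, hb₃⟩ := coeff_of_leftInverse (hfa 0 h01) (hga 0 h01) hf0 hf1 hgf
  obtain ⟨ha₂, ha₃⟩ := coeff_of_mul_deriv_div_eq_comp (hφa 0 h01) hφ0 (hfa 0 h01) hfinj hf0 hf1
    (hr.1 0 h01) hr.2.1 hfr
  obtain ⟨hb₂', hb₃'⟩ := coeff_of_mul_deriv_div_eq_comp (hφa 0 h01) hφ0 (hga 0 h01) hginj hg0
    hg1 (hs.1 0 h01) hs.2.1 hgs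
  rw [hB1] at ha₂ ha₃ hb₂' hb₃'
  have hsr : coeff s 1 = -coeff r 1 :=
    mul_left_cancel₀ (Complex.ofReal_ne_zero.mpr hB1pos.ne')
      (by linear_combination hb₂ - hb₂' - ha₂)
  rw [hb₂, hb₃, hsr] at hb₃'
  have hdiff : coeff f 3 - coeff f 2 ^ 2 = B₁ * (coeff r 2 - coeff s 2) / 4 := by
    linear_combination (ha₃ - hb₃') / 4
  calc ‖coeff f 3 - coeff f 2 ^ 2‖ = B₁ * ‖coeff r 2 - coeff s 2‖ / 4 := by
        rw [hdiff, norm_div, norm_mul, Complex.norm_real, Real.norm_of_nonneg hB1pos.le]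
        norm_num
    _ ≤ B₁ * (1 + 1) / 4 := by
        gcongr
        exact (norm_sub_le _ _).trans
          (add_le_add (hr.norm_coeff_le_one 2) (hs.norm_coeff_le_one 2))
    _ = B₁ / 2 := by ring

/-- For bi-starlike functions of Ma–Minda type, |a₃ - a₂²| ≤ B₁/2. -/
theorem stmt_15 (B₁ B₂ : ℝ) (φ f g : ℂ → ℂ)
    (hφa : AnalyticOnNhd ℂ φ (ball 0 1)) (hφ0 : φ 0 = 1)
    (hφre : ∀ z ∈ ball (0:ℂ) 1, 0 < (φ z).re)
    (hφreal : ∀ n, (coeff φ n).im = 0)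
    (hB1 : coeff φ 1 = (B₁:ℂ)) (hB2 : coeff φ 2 = (B₂:ℂ)) (hB1pos : 0 < B₁)
    (hmem : MemStar φ f g) :
    ‖coeff f 3 - (coeff f 2)^2‖ ≤ B₁ / 2 :=
  stmt_15_general B₁ φ f g hφa hφ0 hB1 hB1pos hmem
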